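/- Under assumption (iv) (there exists a random variable U, taking values in a finite set, such that U is independent of Z, and for each j ∈ {0,1} the potential outcome Y(x_j) is conditionally independent of the pair (X, Z) given U), for every z ∈ {1,…,K}, every i, y, ỹ ∈ {0,1}, both inequalities hold: P(Y(x_i) = y) ≤ P(Y = y, X = i | Z = z) + P(X = 1−i | Z = z), and P(Y(x_0) = y, Y(x_1) = ỹ) ≤ P(Y = y, X = 0 | Z = z) + P(Y = ỹ, X = 1 | Z = z). -/

import Mathlib

open MeasureTheory ProbabilityTheory
open scoped ENNReal

/-!
Conditionally on `U = u`, each potential outcome `Y(xⱼ)` is independent of `(X, Z)`, so for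
`E ⊆ ⋂ⱼ {Y(xⱼ) ∈ Bⱼ}` we get
`P(E | u) P(Z = z | u) ≤ ∑ⱼ P(Y(xⱼ) ∈ Bⱼ | u) P(X = j, Z = z | u) = ∑ⱼ P(Y ∈ Bⱼ, X = j, Z = z | u)`,
the last step by consistency. As `U ⟂ Z`, `P(Z = z | u) = P(Z = z)`, and averaging over the
finitely many values `u` gives `P(E) P(Z = z) ≤ ∑ⱼ P(Y ∈ Bⱼ, X = j, Z = z)`. The two
inequalities are the cases `B = ({y}, univ)` (up to order) and `B = ({y}, {ỹ})`.
-/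

namespace ProbabilityTheory

variable {Ω : Type*} [MeasurableSpace Ω]

/-- Unlike `cond_apply`, this needs no measurability of `s`. -/
lemma inv_mul_measure_inter_le_cond (μ : Measure Ω) (s t : Set Ω) :
    (μ s)⁻¹ * μ (s ∩ t) ≤ μ[t | s] := by
  rw [cond, Measure.smul_apply, smul_eq_mul, Set.inter_comm]
  exact mul_le_mul_right (Measure.le_restrict_apply _ _) _

lemma measure_le_sum_cond_of_mul_le {ι : Type*} (μ : Measure Ω) [IsFiniteMeasure μ]
    {s E : Set Ω} (hs : μ s ≠ 0) (I : Finset ι) (A : ι → Set Ω)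
    (h : μ E * μ s ≤ ∑ i ∈ I, μ (s ∩ A i)) :
    μ E ≤ ∑ i ∈ I, μ[A i | s] := by
  calc μ E ≤ (μ s)⁻¹ * ∑ i ∈ I, μ (s ∩ A i) := by
        rw [← ENNReal.div_eq_inv_mul]
        exact (ENNReal.le_div_iff_mul_le (.inl hs) (.inl (measure_ne_top μ s))).mpr h
    _ = ∑ i ∈ I, (μ s)⁻¹ * μ (s ∩ A i) := Finset.mul_sum _ _ _
    _ ≤ ∑ i ∈ I, μ[A i | s] :=
        Finset.sum_le_sum fun i _ => inv_mul_measure_inter_le_cond μ s (A i)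

lemma measure_mul_le_sum_of_forall_cond {S ι : Type*} [MeasurableSpace S]
    [MeasurableSingletonClass S] [Fintype S] (μ : Measure Ω) [IsFiniteMeasure μ]
    {U : Ω → S} (hU : Measurable U) (c : ℝ≥0∞) (E : Set Ω) (I : Finset ι) (A : ι → Set Ω)
    (h : ∀ u, μ (U ⁻¹' {u}) ≠ 0 → μ[E | U ← u] * c ≤ ∑ i ∈ I, μ[A i | U ← u]) :
    μ E * c ≤ ∑ i ∈ I, μ (A i) := by
  have hmix : ∀ F, μ F = ∑ u, μ (U ⁻¹' {u}) * μ[F | U ← u] := fun F => by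
    conv_lhs => rw [← sum_meas_smul_cond_fiber hU μ]
    simp only [Measure.coe_finsetSum, Measure.coe_smul, Finset.sum_apply, Pi.smul_apply,
      smul_eq_mul]
  rw [hmix E, Finset.sum_mul, Finset.sum_congr rfl fun i _ => hmix (A i), Finset.sum_comm]
  refine Finset.sum_le_sum fun u _ => ?_
  rcases eq_or_ne (μ (U ⁻¹' {u})) 0 with hu | hu
  · simp [hu]
  · rw [mul_assoc, ← Finset.mul_sum]
    exact mul_le_mul_right (h u hu) _

lemma IndepFun.cond_preimage_eq {S K : Type*} [MeasurableSpace S] [MeasurableSpace K]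
    {μ : Measure Ω} [IsFiniteMeasure μ] {U : Ω → S} {Z : Ω → K} (h : IndepFun U Z μ)
    (hU : Measurable U) {s : Set S} {t : Set K} (hs : MeasurableSet s) (ht : MeasurableSet t)
    (hμs : μ (U ⁻¹' s) ≠ 0) :
    μ[Z ⁻¹' t | U ⁻¹' s] = μ (Z ⁻¹' t) := by
  rw [cond_apply (hU hs), h.measure_inter_preimage_eq_mul s t hs ht, ← mul_assoc,
    ENNReal.inv_mul_cancel hμs (measure_ne_top μ _), one_mul]

lemma measure_mul_le_sum_of_indepFun {T K O : Type*} [Fintype T] [MeasurableSpace T]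
    [MeasurableSingletonClass T] [MeasurableSpace K] [MeasurableSingletonClass K]
    [MeasurableSpace O] (ν : Measure Ω) {X : Ω → T} {Z : Ω → K} {Yx : T → Ω → O}
    (hind : ∀ j, IndepFun (Yx j) (fun ω => (X ω, Z ω)) ν) {B : T → Set O}
    (hB : ∀ j, MeasurableSet (B j)) {E : Set Ω} (hE : E ⊆ ⋂ j, Yx j ⁻¹' B j) (z : K) :
    ν E * ν (Z ⁻¹' {z}) ≤ ∑ j, ν (Yx j ⁻¹' B j ∩ (fun ω => (X ω, Z ω)) ⁻¹' {(j, z)}) := by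
  calc ν E * ν (Z ⁻¹' {z}) ≤ ν E * ∑ j, ν ((fun ω => (X ω, Z ω)) ⁻¹' {(j, z)}) := by
        gcongr
        refine (measure_mono fun ω hω => ?_).trans (measure_iUnion_fintype_le ν _)
        exact Set.mem_iUnion.2 ⟨X ω, by simpa using hω⟩
    _ ≤ ∑ j, ν (Yx j ⁻¹' B j) * ν ((fun ω => (X ω, Z ω)) ⁻¹' {(j, z)}) := by
        rw [Finset.mul_sum]
        gcongr with j
        exact hE.trans (Set.iInter_subset _ j)
    _ = _ := Finset.sum_congr rfl fun j _ =>
        ((hind j).measure_inter_preimage_eq_mul _ _ (hB j) (measurableSet_singleton _)).symm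

theorem measure_le_sum_cond_of_instrument {S T K O : Type*} [MeasurableSpace S]
    [MeasurableSingletonClass S] [Fintype S] [Fintype T] [MeasurableSpace T]
    [MeasurableSingletonClass T] [MeasurableSpace K] [MeasurableSingletonClass K]
    [MeasurableSpace O] (P : Measure Ω) [IsFiniteMeasure P]
    {Z : Ω → K} {X : Ω → T} {Yx : T → Ω → O} {Y : Ω → O} (hY : ∀ ω, Y ω = Yx (X ω) ω)
    {U : Ω → S} (hU : Measurable U) (hUZ : IndepFun U Z P)
    (hcond : ∀ j u, P (U ⁻¹' {u}) ≠ 0 → IndepFun (Yx j) (fun ω => (X ω, Z ω)) P[|U ← u])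
    {z : K} (hz : P (Z ⁻¹' {z}) ≠ 0) (B : T → Set O) (hB : ∀ j, MeasurableSet (B j))
    (E : Set Ω) (hE : E ⊆ ⋂ j, Yx j ⁻¹' B j) :
    P E ≤ ∑ j, P[{ω | Y ω ∈ B j ∧ X ω = j} | Z ⁻¹' {z}] := by
  have hconsistency : ∀ j, Yx j ⁻¹' B j ∩ (fun ω => (X ω, Z ω)) ⁻¹' {(j, z)} =
      Z ⁻¹' {z} ∩ {ω | Y ω ∈ B j ∧ X ω = j} := fun j => by
    ext ω
    simp only [Set.mem_inter_iff, Set.mem_preimage, Set.mem_singleton_iff, Set.mem_ofPred_eq,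
      Prod.ext_iff, hY]
    constructor
    · rintro ⟨hYB, rfl, hZz⟩
      exact ⟨hZz, hYB, rfl⟩
    · rintro ⟨hZz, hYB, rfl⟩
      exact ⟨hYB, rfl, hZz⟩
  refine measure_le_sum_cond_of_mul_le P hz _ _ ?_
  simp_rw [← hconsistency]
  refine measure_mul_le_sum_of_forall_cond P hU _ E _ _ fun u hu => ?_
  rw [← hUZ.cond_preimage_eq hU (measurableSet_singleton u) (measurableSet_singleton z) hu]
  exact measure_mul_le_sum_of_indepFun _ (fun j => hcond j u hu) hB hE z

end ProbabilityTheory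

theorem stmt4
    {Ω : Type*} [MeasurableSpace Ω] (P : Measure Ω) [IsProbabilityMeasure P]
    (K : ℕ)
    (Z : Ω → Fin K) (X : Ω → Fin 2) (Y0 Y1 : Ω → Fin 2)
    (Y : Ω → Fin 2) (hY : ∀ ω, Y ω = if X ω = 0 then Y0 ω else Y1 ω)
    (hpos : ∀ z, 0 < P (Z ⁻¹' {z}))
    (S : Type*) [MeasurableSpace S] [MeasurableSingletonClass S] [Finite S]
    (U : Ω → S) (hU : Measurable U)
    (hUZ : IndepFun U Z P)
    (hcondindep : ∀ (j : Fin 2) (u : S), 0 < P (U ⁻¹' {u}) →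
      IndepFun (if j = 0 then Y0 else Y1) (fun ω => (X ω, Z ω)) (P[|U ⁻¹' {u}])) :
    ∀ (z : Fin K) (i y ytilde : Fin 2),
      ((P {ω | (if i = 0 then Y0 ω else Y1 ω) = y}).toReal ≤
        (P[|Z ⁻¹' {z}] {ω | Y ω = y ∧ X ω = i}).toReal +
          (P[|Z ⁻¹' {z}] {ω | X ω = 1 - i}).toReal) ∧
      ((P {ω | Y0 ω = y ∧ Y1 ω = ytilde}).toReal ≤
        (P[|Z ⁻¹' {z}] {ω | Y ω = y ∧ X ω = 0}).toReal +
          (P[|Z ⁻¹' {z}] {ω | Y ω = ytilde ∧ X ω = 1}).toReal) := by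
  intro z i y ytilde
  have := Fintype.ofFinite S
  have hYx : ∀ ω, Y ω = (fun j : Fin 2 => if j = 0 then Y0 else Y1) (X ω) ω :=
    fun ω => (hY ω).trans (ite_apply ..).symm
  have bound := measure_le_sum_cond_of_instrument P hYx hU hUZ
    (fun j u hu => hcondindep j u (pos_iff_ne_zero.2 hu)) (hpos z).ne'
  refine ⟨?_, ?_⟩ <;> rw [← ENNReal.toReal_add (by finiteness) (by finiteness)] <;>
    refine ENNReal.toReal_mono (by finiteness) ?_
  · have := bound (fun j => if j = i then {y} else Set.univ)
      (fun j => by split_ifs <;> simp) {ω | (if i = 0 then Y0 ω else Y1 ω) = y}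
      (fun ω hω => Set.mem_iInter.2 fun j => by
        by_cases hj : j = i
        · subst hj; simpa [ite_apply] using hω
        · simp [hj])
    fin_cases i <;> simpa [Fin.sum_univ_two, add_comm] using this
  · have := bound ![{y}, {ytilde}] (fun j => by fin_cases j <;> simp)
      {ω | Y0 ω = y ∧ Y1 ω = ytilde}
      (fun ω hω => Set.mem_iInter.2 fun j => by fin_cases j <;> simp [hω.1, hω.2])
    simpa [Fin.sum_univ_two] using this
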